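/- Let p > 3 be a prime and let a, b ∈ ℚ_p be nonzero with |a|_p³ > |b|_p², the p-adic valuation v_p(a) even, and (3a_0)^{(p−1)/2} ≡ 1 (mod p), where a_0 is the first digit of a. Then the Cardano formula is applicable in ℚ_p: there exist y, u, v ∈ ℚ_p such that y² = (a/3)³ + (b/2)², u³ = b/2 + y, v³ = b/2 − y, u·v = −a/3, and x = u + v satisfies x³ + ax = b. -/

import Mathlib

/-- `x0` is the first digit of the nonzero `p`-adic number `x`: the unique integer in
`{1, …, p-1}` congruent modulo `p` to the unit part `x* = x·|x|_p = x·p^{-v_p(x)}`. -/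
def isFirstDigit (p : ℕ) [Fact p.Prime] (x : ℚ_[p]) (x0 : ℤ) : Prop :=
  1 ≤ x0 ∧ x0 ≤ (p : ℤ) - 1 ∧ ‖x * (p : ℚ_[p]) ^ (-x.valuation) - (x0 : ℚ_[p])‖ < 1

/-!
Write `v(a) = 2k` and let `c² ≡ 3a₀ (mod p)`, which exists by Euler's criterion. Then
`r = p^k c / 3` satisfies `|a/3 - r²| < |a/3|`, so `r·a/3` approximates a square root of the
discriminant `(a/3)³ + (b/2)²` (the term `(b/2)²` is negligible because `|b|² < |a|³`), and `r³`
approximates `b/2 + y` for the root `y` close to `r·a/3`. Since `p ∤ 6`, Hensel's lemma turns both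
approximations into exact roots `y` and `u`, and `v = -a/(3u)` completes Cardano's formula.
-/

namespace IsUltrametricDist

section Group

variable {S : Type*} [SeminormedAddCommGroup S] [IsUltrametricDist S]

theorem norm_eq_of_norm_sub_lt {x y : S} (h : ‖x - y‖ < ‖x‖) : ‖y‖ = ‖x‖ := by
  have := norm_add_eq_max_of_norm_ne_norm (x := x) (y := y - x)
    (by rw [norm_sub_rev]; exact h.ne')
  rwa [add_sub_cancel, max_eq_left (by rw [norm_sub_rev]; exact h.le)] at this

theorem norm_add_lt_of_lt {x y : S} {r : ℝ} (hx : ‖x‖ < r) (hy : ‖y‖ < r) : ‖x + y‖ < r :=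
  (norm_add_le_max x y).trans_lt (max_lt hx hy)

end Group

variable {K : Type*} [NormedField K] [IsUltrametricDist K]
  {A B r : K} (hr : ‖A - r ^ 2‖ < ‖A‖) (hB : ‖B‖ ^ 2 < ‖A‖ ^ 3)
include hr hB

theorem norm_cube_add_sq_sub_sq_lt : ‖A ^ 3 + B ^ 2 - (r * A) ^ 2‖ < ‖r * A‖ ^ 2 := by
  have hr2 : ‖r‖ ^ 2 = ‖A‖ := by rw [← norm_pow]; exact norm_eq_of_norm_sub_lt hr
  have hrA : ‖r * A‖ ^ 2 = ‖A‖ ^ 3 := by rw [norm_mul, mul_pow, hr2]; ring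
  have hA : 0 < ‖A‖ := (norm_nonneg _).trans_lt hr
  rw [hrA, show A ^ 3 + B ^ 2 - (r * A) ^ 2 = A ^ 2 * (A - r ^ 2) + B ^ 2 by ring]
  refine norm_add_lt_of_lt ?_ (by rwa [norm_pow])
  rw [norm_mul, norm_pow, pow_succ ‖A‖ 2]
  exact mul_lt_mul_of_pos_left hr (by positivity)

theorem norm_add_sub_cube_lt {y : K} (hy : ‖y - r * A‖ < ‖r * A‖) :
    ‖B + y - r ^ 3‖ < ‖r‖ ^ 3 := by
  have hr2 : ‖r‖ ^ 2 = ‖A‖ := by rw [← norm_pow]; exact norm_eq_of_norm_sub_lt hr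
  have hrA : ‖r * A‖ = ‖r‖ ^ 3 := by rw [norm_mul, ← hr2]; ring
  have hr0 : 0 < ‖r‖ := norm_pos_iff.2 fun h0 => by simp [h0] at hr
  rw [show B + y - r ^ 3 = B + (y - r * A) + r * (A - r ^ 2) by ring]
  refine norm_add_lt_of_lt (norm_add_lt_of_lt ?_ (hrA ▸ hy)) ?_
  · refine lt_of_pow_lt_pow_left₀ 2 (by positivity) ?_
    rw [← pow_mul, mul_comm, pow_mul, hr2]
    exact hB
  · rw [norm_mul, pow_succ' ‖r‖ 2, hr2]
    exact mul_lt_mul_of_pos_left hr hr0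

end IsUltrametricDist

theorem exists_cardano_solution_of_cube_eq {K : Type*} [Field K] [NeZero (2 : K)]
    [NeZero (3 : K)] {a b y u : K} (hy : y ^ 2 = (a / 3) ^ 3 + (b / 2) ^ 2) (hu : u ^ 3 = b / 2 + y)
    (hu0 : u ≠ 0) :
    ∃ v, v ^ 3 = b / 2 - y ∧ u * v = -(a / 3) ∧ (u + v) ^ 3 + a * (u + v) = b := by
  set v := -(a / 3) / u
  have huv : u * v = -(a / 3) := mul_div_cancel₀ _ hu0
  have hv : v ^ 3 = b / 2 - y := by
    apply mul_right_cancel₀ (pow_ne_zero 3 hu0)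
    rw [← mul_pow, mul_comm, huv, hu]
    linear_combination hy
  refine ⟨v, hv, huv, ?_⟩
  have h3 : 3 * (a / 3) = a := mul_div_cancel₀ a (NeZero.ne 3)
  linear_combination hu + hv + 3 * (u + v) * huv - (u + v) * h3 + add_halves b

theorem Int.exists_sq_modEq_of_pow_modEq_one {p : ℕ} [Fact p.Prime] (hp2 : p ≠ 2) {x : ℤ}
    (h : x ^ ((p - 1) / 2) ≡ 1 [ZMOD p]) : ∃ c : ℤ, c ^ 2 ≡ x [ZMOD p] := by
  simp_rw [← ZMod.intCast_eq_intCast_iff] at h ⊢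
  push_cast at h ⊢
  by_cases hx : (x : ZMod p) = 0
  · exact ⟨0, by simp [hx]⟩
  have hp : p / 2 = (p - 1) / 2 := by
    have := (Fact.out : p.Prime).eq_two_or_odd
    omega
  obtain ⟨c, hc⟩ := (ZMod.euler_criterion p hx).2 (hp ▸ h)
  obtain ⟨c, rfl⟩ := ZMod.intCast_surjective c
  exact ⟨c, by rw [hc, sq]⟩

namespace Padic

variable {p : ℕ} [Fact p.Prime] {n : ℕ}

theorem norm_ofNat_eq_one [n.AtLeastTwo] (hn : p.Coprime n) :
    ‖(OfNat.ofNat n : ℚ_[p])‖ = 1 := by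
  exact_mod_cast norm_natCast_eq_one_iff.2 hn

open Polynomial in
theorem exists_pow_eq_of_norm_sub_one_lt (hn : p.Coprime n) {x : ℚ_[p]} (hx : ‖x - 1‖ < 1) :
    ∃ z : ℚ_[p], z ^ n = x ∧ ‖z - 1‖ < 1 := by
  have hx1 : ‖x‖ = 1 := by
    simpa using IsUltrametricDist.norm_eq_of_norm_sub_lt (x := (1 : ℚ_[p]))
      (by rwa [norm_sub_rev, norm_one])
  obtain ⟨x, rfl⟩ : ∃ x' : ℤ_[p], (x' : ℚ_[p]) = x := ⟨⟨x, hx1.le⟩, rfl⟩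
  have hF' : ‖aeval (1 : ℤ_[p]) (derivative (X ^ n - C x))‖ = 1 := by
    simpa [derivative_X_pow] using PadicInt.norm_natCast_eq_one_iff.2 hn
  have hF : ‖aeval (1 : ℤ_[p]) (X ^ n - C x)‖ <
      ‖aeval (1 : ℤ_[p]) (derivative (X ^ n - C x))‖ ^ 2 := by
    rw [hF', one_pow, map_sub, map_pow, aeval_X, aeval_C, one_pow, norm_sub_rev]
    exact hx
  obtain ⟨z, hz, hz1, -⟩ := hensels_lemma hF
  refine ⟨z, ?_, by rwa [hF'] at hz1⟩
  rw [map_sub, map_pow, aeval_X, aeval_C, sub_eq_zero] at hz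
  exact congrArg ((↑) : ℤ_[p] → ℚ_[p]) hz

theorem exists_pow_eq_of_norm_sub_pow_lt (hn : p.Coprime n) {x t : ℚ_[p]}
    (h : ‖x - t ^ n‖ < ‖t‖ ^ n) : ∃ z : ℚ_[p], z ^ n = x ∧ ‖z - t‖ < ‖t‖ := by
  have hn0 : n ≠ 0 := by
    rintro rfl
    exact (Fact.out : p.Prime).one_lt.ne' (Nat.coprime_zero_right p |>.1 hn)
  have ht : t ≠ 0 := by
    rintro rfl
    simpa [hn0] using (norm_nonneg _).trans_lt h
  have htn : t ^ n ≠ 0 := pow_ne_zero n ht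
  obtain ⟨w, hw, hw1⟩ := exists_pow_eq_of_norm_sub_one_lt hn (x := x / t ^ n) (by
    rwa [← div_self htn, ← sub_div, norm_div, norm_pow, div_lt_one (by positivity)])
  refine ⟨t * w, by rw [mul_pow, hw, mul_div_cancel₀ _ htn], ?_⟩
  rw [← mul_sub_one, norm_mul]
  exact mul_lt_of_lt_one_right (norm_pos_iff.2 ht) hw1

theorem norm_div_three_sub_sq_lt (h3 : p.Coprime 3) {a : ℚ_[p]} (ha : a ≠ 0) {k : ℤ}
    (hk : a.valuation = 2 * k) {a0 c : ℤ} (ha0 : ‖a * p ^ (-a.valuation) - a0‖ < 1)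
    (hc : c ^ 2 ≡ 3 * a0 [ZMOD p]) :
    ‖a / 3 - ((p : ℚ_[p]) ^ k * c / 3) ^ 2‖ < ‖a / 3‖ := by
  have hp0 : (p : ℚ_[p]) ≠ 0 := Nat.cast_ne_zero.2 (Fact.out : p.Prime).ne_zero
  have h3n : ‖(3 : ℚ_[p])‖ = 1 := norm_ofNat_eq_one h3
  set P : ℚ_[p] := (p : ℚ_[p]) ^ k
  set α := a * (p : ℚ_[p]) ^ (-a.valuation)
  have hP : P ^ 2 = (p : ℚ_[p]) ^ a.valuation := by
    rw [hk, ← zpow_natCast, ← zpow_mul, mul_comm]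
    rfl
  have haα : a = P ^ 2 * α := by
    rw [hP, mul_left_comm, ← zpow_add₀ hp0, add_neg_cancel, zpow_zero, mul_one]
  have hunit : ‖3 * (α - a0) + ((3 * a0 - c ^ 2 : ℤ) : ℚ_[p])‖ < 1 := by
    refine IsUltrametricDist.norm_add_lt_of_lt ?_ (norm_intCast_lt_one_iff.2 hc.dvd)
    rwa [norm_mul, h3n, one_mul]
  calc ‖a / 3 - (P * c / 3) ^ 2‖
      = ‖P ^ 2‖ * ‖3 * (α - a0) + ((3 * a0 - c ^ 2 : ℤ) : ℚ_[p])‖ / ‖(3 : ℚ_[p])‖ ^ 2 := by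
        rw [← norm_pow, ← norm_mul, ← norm_div]
        congr 1
        rw [haα]
        push_cast
        ring
    _ < ‖a / 3‖ := by
        rw [h3n, one_pow, div_one, norm_div, h3n, div_one, hP, norm_p_zpow,
          ← norm_eq_zpow_neg_valuation ha]
        exact mul_lt_of_lt_one_right (norm_pos_iff.2 ha) hunit

end Padic

theorem cardano_applicable_of_gt_general (p : ℕ) [Fact p.Prime] (hp : 3 < p)
    (a b : ℚ_[p]) (ha : a ≠ 0)
    (hab : ‖b‖ ^ 2 < ‖a‖ ^ 3)
    (hval : (2 : ℤ) ∣ a.valuation)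
    (a0 : ℤ) (ha0 : isFirstDigit p a a0)
    (hres : Int.ModEq (p : ℤ) ((3 * a0) ^ ((p - 1) / 2)) 1) :
    ∃ y u v : ℚ_[p],
      y ^ 2 = (a / 3) ^ 3 + (b / 2) ^ 2 ∧
      u ^ 3 = b / 2 + y ∧
      v ^ 3 = b / 2 - y ∧
      u * v = -(a / 3) ∧
      (u + v) ^ 3 + a * (u + v) = b := by
  have hprime : p.Prime := Fact.out
  have h2 : p.Coprime 2 := (Nat.coprime_primes hprime Nat.prime_two).2 (by omega)
  have h3 : p.Coprime 3 := (Nat.coprime_primes hprime Nat.prime_three).2 (by omega)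
  obtain ⟨k, hk⟩ := hval
  obtain ⟨c, hc⟩ := Int.exists_sq_modEq_of_pow_modEq_one (by omega) hres
  have hr := Padic.norm_div_three_sub_sq_lt h3 ha hk ha0.2.2 hc
  have hB : ‖b / 2‖ ^ 2 < ‖a / 3‖ ^ 3 := by
    rwa [norm_div, norm_div, Padic.norm_ofNat_eq_one h2, Padic.norm_ofNat_eq_one h3, div_one,
      div_one]
  obtain ⟨y, hy, hyr⟩ :=
    Padic.exists_pow_eq_of_norm_sub_pow_lt h2 (IsUltrametricDist.norm_cube_add_sq_sub_sq_lt hr hB)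
  obtain ⟨u, hu, hur⟩ :=
    Padic.exists_pow_eq_of_norm_sub_pow_lt h3 (IsUltrametricDist.norm_add_sub_cube_lt hr hB hyr)
  have hu0 : u ≠ 0 := by
    rintro rfl
    simp at hur
  obtain ⟨v, hv, huv, hx⟩ := exists_cardano_solution_of_cube_eq hy hu hu0
  exact ⟨y, u, v, hy, hu, hv, huv, hx⟩

theorem cardano_applicable_of_gt (p : ℕ) [Fact p.Prime] (hp : 3 < p)
    (a b : ℚ_[p]) (ha : a ≠ 0) (hb : b ≠ 0)
    (hab : ‖b‖ ^ 2 < ‖a‖ ^ 3)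
    (hval : (2 : ℤ) ∣ a.valuation)
    (a0 : ℤ) (ha0 : isFirstDigit p a a0)
    (hres : Int.ModEq (p : ℤ) ((3 * a0) ^ ((p - 1) / 2)) 1) :
    ∃ y u v : ℚ_[p],
      y ^ 2 = (a / 3) ^ 3 + (b / 2) ^ 2 ∧
      u ^ 3 = b / 2 + y ∧
      v ^ 3 = b / 2 - y ∧
      u * v = -(a / 3) ∧
      (u + v) ^ 3 + a * (u + v) = b :=
  cardano_applicable_of_gt_general p hp a b ha hab hval a0 ha0 hres
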